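/- arXiv:math/9802057 — 3 statements merged into one kernel-verified Lean document; each statement's English description precedes it below -/
import Mathlib

section
/- Let U', g and J⁺_{e^{iφ}} (φ ∈ ℝ) be as in Theorem 1 (the explicit Ricci-flat example). Then the fundamental 2-form ω⁺_{e^{iφ}}(X,Y) = g(X, J⁺_{e^{iφ}}Y) equals the constant-coefficient 2-form i(e^{iφ} dz₂∧dz₁ − e^{−iφ} dz̄₂∧dz̄₁) on U', and this 2-form is closed; hence (U', g, J⁺_{e^{iφ}}) is an almost-Kähler structure for every φ ∈ [0, 2π). -/
/-!
The 1-form `A = dz₁ − 2z̄₂dz₂` is sent by `J⁺` to a multiple of `dz̄₂`: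
`conj (A (J Y)) = −2i e^{iφ} √w Y₂`, while `conj ((J Y)₂) = i e^{iφ} A(Y) / (2√w)`.
Substituting into `g(X, JY) = w^{-1/2} Re(A(X) conj A(JY)) + 4 w^{1/2} Re(X₂ conj (JY)₂)`,
the factors `√w` cancel and the `z₂`-dependence of `A` cancels between the two terms, leaving
the constant-coefficient form `i(e^{iφ} dz₂∧dz₁ − e^{−iφ} dz̄₂∧dz̄₁)`. Being locally
constant on the open set `U'`, it has vanishing derivatives, so it is closed.
-/

noncomputable section

/-- `w(z₁,z₂) = v − 2z₂z̄₂` where `v = z₁ + z̄₁ = 2 Re z₁`. -/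
def wDef (p : ℂ × ℂ) : ℝ := 2 * p.1.re - 2 * Complex.normSq p.2

/-- The region `U' = {(z₁,z₂) ∈ ℂ² : v − 2z₂z̄₂ > 0}`. -/
def Uprime : Set (ℂ × ℂ) := {p | 0 < wDef p}

/-- `K = log(v − 2z₂z̄₂)`. -/
def KDef (p : ℂ × ℂ) : ℝ := Real.log (wDef p)

/-- `K` as a function of `v` at fixed `z₂`. -/
def KofV (z₂ : ℂ) (v : ℝ) : ℝ := Real.log (v - 2 * Complex.normSq z₂)

/-- `K_v = ∂K/∂v`. -/
def Kv (p : ℂ × ℂ) : ℝ := deriv (KofV p.2) (2 * p.1.re)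

/-- `K_vv = ∂²K/∂v²`. -/
def Kvv (p : ℂ × ℂ) : ℝ := deriv (deriv (KofV p.2)) (2 * p.1.re)

/-- The Wirtinger derivative `∂G/∂z = ½(∂_x G − i ∂_y G)` of `G : ℂ → ℂ` at `c`. -/
def wirtD (G : ℂ → ℂ) (c : ℂ) : ℂ :=
  (deriv (fun x : ℝ => G ((x : ℂ) + (c.im : ℂ) * Complex.I)) c.re -
    Complex.I * deriv (fun y : ℝ => G ((c.re : ℂ) + (y : ℂ) * Complex.I)) c.im) / 2

/-- The Wirtinger derivative `∂G/∂z̄ = ½(∂_x G + i ∂_y G)` of `G : ℂ → ℂ` at `c`. -/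
def wirtDbar (G : ℂ → ℂ) (c : ℂ) : ℂ :=
  (deriv (fun x : ℝ => G ((x : ℂ) + (c.im : ℂ) * Complex.I)) c.re +
    Complex.I * deriv (fun y : ℝ => G ((c.re : ℂ) + (y : ℂ) * Complex.I)) c.im) / 2

/-- `K_{v2} = ∂²K/∂v∂z₂` (Wirtinger derivative in `z₂` of `K_v`). -/
def Kv2 (p : ℂ × ℂ) : ℂ :=
  wirtD (fun z₂ => ((deriv (KofV z₂) (2 * p.1.re) : ℝ) : ℂ)) p.2

/-- `K_{v2̄} = ∂²K/∂v∂z̄₂`. -/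
def Kv2bar (p : ℂ × ℂ) : ℂ :=
  wirtDbar (fun z₂ => ((deriv (KofV z₂) (2 * p.1.re) : ℝ) : ℂ)) p.2

/-- `K_{22̄} = ∂²K/∂z₂∂z̄₂` (at fixed `v`). -/
def K22bar (p : ℂ × ℂ) : ℂ :=
  wirtDbar (fun z₂ =>
    wirtD (fun u => ((Real.log (2 * p.1.re - 2 * Complex.normSq u) : ℝ) : ℂ)) z₂) p.2

/-- The 1-form `dz₁ − 2z̄₂dz₂` evaluated on a real tangent vector `X ∈ ℂ² ≅ ℝ⁴`. -/
def AForm (p : ℂ × ℂ) (X : ℂ × ℂ) : ℂ := X.1 - 2 * starRingEnd ℂ p.2 * X.2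

/-- The explicit Ricci-flat metric
`g = (v − 2z₂z̄₂)^{−1/2}(dz₁ − 2z̄₂dz₂)(dz̄₁ − 2z₂dz̄₂) + 4(v − 2z₂z̄₂)^{1/2} dz₂ dz̄₂`
(with `2αβ = α⊗β + β⊗α`) on real tangent vectors. -/
def gExpl (p : ℂ × ℂ) (X Y : ℂ × ℂ) : ℝ :=
  1 / Real.sqrt (wDef p) * (AForm p X * starRingEnd ℂ (AForm p Y)).re +
    4 * Real.sqrt (wDef p) * (X.2 * starRingEnd ℂ Y.2).re

/-- The almost complex structure
`J⁺_{e^{iφ}} = 2Re{ i e^{iφ} [ (2(v − 2z₂z̄₂)^{1/2})^{−1}(dz₁ − 2z̄₂dz₂) ⊗ (∂_{z̄₂} + 2z₂∂_{z̄₁}) − 2(v − 2z₂z̄₂)^{1/2} dz₂ ⊗ ∂_{z̄₁} ] }`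
as a real endomorphism of the tangent space `ℂ² ≅ ℝ⁴`: a real tangent vector `X`
corresponds to `X.1 ∂_{z₁} + conj X.1 ∂_{z̄₁} + X.2 ∂_{z₂} + conj X.2 ∂_{z̄₂}` in the
complexified tangent space; the components below are the `∂_{z₁}`- and
`∂_{z₂}`-coefficients of `(T + T̄)(X)`. -/
def JExpl (φ : ℝ) (p : ℂ × ℂ) (X : ℂ × ℂ) : ℂ × ℂ :=
  (starRingEnd ℂ (Complex.I * Complex.exp ((φ : ℂ) * Complex.I) *
      (AForm p X / (2 * (Real.sqrt (wDef p) : ℂ)) * (2 * p.2) -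
        2 * (Real.sqrt (wDef p) : ℂ) * X.2)),
   starRingEnd ℂ (Complex.I * Complex.exp ((φ : ℂ) * Complex.I) *
      (AForm p X / (2 * (Real.sqrt (wDef p) : ℂ)))))

/-- The fundamental 2-form `ω⁺_{e^{iφ}}(X,Y) = g(X, J⁺_{e^{iφ}} Y)` of the explicit
example, as a function of the point. -/
def omegaExpl (φ : ℝ) (p : ℂ × ℂ) (X Y : ℂ × ℂ) : ℝ := gExpl p X (JExpl φ p Y)

open Complex

def omegaConst (φ : ℝ) (X Y : ℂ × ℂ) : ℂ :=
  I * (exp ((φ : ℂ) * I) * (X.2 * Y.1 - X.1 * Y.2) -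
    exp (-((φ : ℂ) * I)) *
      (starRingEnd ℂ X.2 * starRingEnd ℂ Y.1 - starRingEnd ℂ X.1 * starRingEnd ℂ Y.2))

theorem continuous_wDef : Continuous wDef :=
  (continuous_const.mul (continuous_re.comp continuous_fst)).sub
    (continuous_const.mul (continuous_normSq.comp continuous_snd))

theorem isOpen_Uprime : IsOpen Uprime :=
  isOpen_lt continuous_const continuous_wDef

theorem ofReal_sqrt_wDef_ne_zero {p : ℂ × ℂ} (hp : p ∈ Uprime) :
    ((Real.sqrt (wDef p) : ℝ) : ℂ) ≠ 0 :=
  ofReal_ne_zero.2 (Real.sqrt_pos.2 hp).ne'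

theorem conj_exp_ofReal_mul_I (φ : ℝ) :
    starRingEnd ℂ (exp ((φ : ℂ) * I)) = exp (-((φ : ℂ) * I)) := by
  rw [← exp_conj, map_mul, conj_ofReal, conj_I, mul_neg]

theorem conj_AForm_JExpl (φ : ℝ) {p : ℂ × ℂ} (hp : p ∈ Uprime) (Y : ℂ × ℂ) :
    starRingEnd ℂ (AForm p (JExpl φ p Y)) =
      -2 * I * exp ((φ : ℂ) * I) * (Real.sqrt (wDef p) : ℂ) * Y.2 := by
  have hsqrt := ofReal_sqrt_wDef_ne_zero hp
  simp only [AForm, JExpl, map_mul, map_div₀, map_sub, map_neg, map_ofNat, conj_conj, conj_I]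
  field_simp
  ring

theorem conj_JExpl_snd (φ : ℝ) (p : ℂ × ℂ) (Y : ℂ × ℂ) :
    starRingEnd ℂ (JExpl φ p Y).2 =
      I * exp ((φ : ℂ) * I) * (AForm p Y / (2 * (Real.sqrt (wDef p) : ℂ))) :=
  conj_conj _

theorem omegaExpl_eq_omegaConst (φ : ℝ) {p : ℂ × ℂ} (hp : p ∈ Uprime) (X Y : ℂ × ℂ) :
    (omegaExpl φ p X Y : ℂ) = omegaConst φ X Y := by
  have hsqrt := ofReal_sqrt_wDef_ne_zero hp
  rw [omegaExpl, gExpl]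
  push_cast
  rw [re_eq_add_conj, re_eq_add_conj, conj_AForm_JExpl φ hp, conj_JExpl_snd]
  simp only [omegaConst, AForm, map_mul, map_div₀, map_sub, map_neg, map_ofNat, conj_conj,
    conj_I, conj_ofReal, conj_exp_ofReal_mul_I]
  field_simp
  ring

theorem fderiv_eq_zero_of_eqOn_const {𝕜 E F : Type*} [NontriviallyNormedField 𝕜]
    [NormedAddCommGroup E] [NormedSpace 𝕜 E] [NormedAddCommGroup F] [NormedSpace 𝕜 F]
    {f : E → F} {s : Set E} {c : F} {x : E} (hs : IsOpen s) (hf : Set.EqOn f (fun _ => c) s)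
    (hx : x ∈ s) : fderiv 𝕜 f x = 0 := by
  rw [Filter.eventuallyEq_of_mem (hs.mem_nhds hx) hf |>.fderiv_eq, fderiv_const_apply]

/-- On `U'`, the fundamental 2-form `ω⁺_{e^{iφ}}` equals the
constant-coefficient 2-form `i(e^{iφ} dz₂∧dz₁ − e^{−iφ} dz̄₂∧dz̄₁)`, and this form
is closed (the cyclic sum of directional derivatives of its coefficients vanishes);
hence `(U', g, J⁺_{e^{iφ}})` is almost-Kähler for every `φ`. -/
theorem omegaExpl_constant_closed (φ : ℝ) :
    (∀ p ∈ Uprime, ∀ X Y : ℂ × ℂ,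
      ((omegaExpl φ p X Y : ℝ) : ℂ) =
        Complex.I * (Complex.exp ((φ : ℂ) * Complex.I) * (X.2 * Y.1 - X.1 * Y.2) -
          Complex.exp (-((φ : ℂ) * Complex.I)) *
            (starRingEnd ℂ X.2 * starRingEnd ℂ Y.1 -
              starRingEnd ℂ X.1 * starRingEnd ℂ Y.2))) ∧
    (∀ p ∈ Uprime, ∀ X Y Z : ℂ × ℂ,
      fderiv ℝ (fun q => omegaExpl φ q Y Z) p X +
        fderiv ℝ (fun q => omegaExpl φ q Z X) p Y +
        fderiv ℝ (fun q => omegaExpl φ q X Y) p Z = 0) := by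
  refine ⟨fun p hp X Y => omegaExpl_eq_omegaConst φ hp X Y, fun p hp X Y Z => ?_⟩
  have hconst (A B : ℂ × ℂ) : fderiv ℝ (fun q => omegaExpl φ q A B) p = 0 :=
    fderiv_eq_zero_of_eqOn_const (c := (omegaConst φ A B).re) isOpen_Uprime
      (fun q hq => by simp [← omegaExpl_eq_omegaConst φ hq]) hp
  simp only [hconst, zero_apply, add_zero]
end
end

section
/- Define Ψ : ℝ⁴ → ℂ² by Ψ(t, y, z, q) = (z₁, z₂) with z₂ = (y + iz)/2 and z₁ = ½e^{2t} + (y² + z²)/4 + iq. Then Ψ is a smooth diffeomorphism from all of ℝ⁴ onto U' = {(z₁, z₂) ∈ ℂ² : z₁ + z̄₁ − 2z₂z̄₂ > 0}; in particular, in the coordinates (t, y, z, q) the structures of Theorem 1 extend to globally regular structures on ℝ⁴. -/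
noncomputable section

/-- The globalizing coordinate transformation
`Ψ(t,y,z,q) = (½e^{2t} + (y²+z²)/4 + iq, (y+iz)/2)`, so that
`t = ½ log(v − 2z₂z̄₂)`, `y = z₂ + z̄₂`, `z = i(z̄₂ − z₂)`, `q = (z₁−z̄₁)/(2i)`. -/
def PsiGlob (p : ℝ × ℝ × ℝ × ℝ) : ℂ × ℂ :=
  (((Real.exp (2 * p.1) / 2 + (p.2.1 ^ 2 + p.2.2.1 ^ 2) / 4 : ℝ) : ℂ) +
      ((p.2.2.2 : ℝ) : ℂ) * Complex.I,
   (((p.2.1 : ℝ) : ℂ) + ((p.2.2.1 : ℝ) : ℂ) * Complex.I) / 2)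

/-! Along `Ψ` one has `v − 2z₂z̄₂ = e^{2t}`, so `t = ½ log (v − 2z₂z̄₂)` while `y, z, q` are read off
linearly from `z₂` and `Im z₁`; this explicit inverse is smooth exactly where `v − 2z₂z̄₂ > 0`. -/

def PhiGlob (q : ℂ × ℂ) : ℝ × ℝ × ℝ × ℝ :=
  (Real.log (wDef q) / 2, 2 * q.2.re, 2 * q.2.im, q.1.im)

section Smoothness

variable {n : WithTop ℕ∞}

@[fun_prop]
theorem Complex.contDiff_ofReal : ContDiff ℝ n ((↑) : ℝ → ℂ) :=
  Complex.ofRealCLM.contDiff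

@[fun_prop]
theorem Complex.contDiff_re : ContDiff ℝ n Complex.re :=
  Complex.reCLM.contDiff

@[fun_prop]
theorem Complex.contDiff_im : ContDiff ℝ n Complex.im :=
  Complex.imCLM.contDiff

theorem contDiff_PsiGlob : ContDiff ℝ n PsiGlob := by
  unfold PsiGlob
  fun_prop

theorem contDiff_wDef : ContDiff ℝ n wDef := by
  unfold wDef
  simp only [Complex.normSq_apply]
  fun_prop

theorem contDiffOn_PhiGlob : ContDiffOn ℝ n PhiGlob Uprime := by
  have hlog : ContDiffOn ℝ n (fun q => Real.log (wDef q)) Uprime :=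
    contDiff_wDef.contDiffOn.log fun _ hq => ne_of_gt hq
  refine ContDiffOn.prodMk (hlog.div_const 2) (ContDiff.contDiffOn ?_)
  fun_prop

end Smoothness

theorem wDef_PsiGlob (p : ℝ × ℝ × ℝ × ℝ) : wDef (PsiGlob p) = Real.exp (2 * p.1) := by
  simp only [wDef, PsiGlob, Complex.normSq_apply, Complex.add_re, Complex.add_im, Complex.mul_re,
    Complex.mul_im, Complex.div_ofNat_re, Complex.div_ofNat_im, Complex.ofReal_re,
    Complex.ofReal_im, Complex.I_re, Complex.I_im]
  ring

theorem PhiGlob_PsiGlob (p : ℝ × ℝ × ℝ × ℝ) : PhiGlob (PsiGlob p) = p := by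
  obtain ⟨t, y, z, q⟩ := p
  simp only [PhiGlob, wDef_PsiGlob, Real.log_exp, Prod.mk.injEq]
  simp only [PsiGlob, Complex.add_re, Complex.add_im, Complex.mul_re,
    Complex.mul_im, Complex.div_ofNat_re, Complex.div_ofNat_im, Complex.ofReal_re,
    Complex.ofReal_im, Complex.I_re, Complex.I_im]
  refine ⟨?_, ?_, ?_, ?_⟩ <;> ring

theorem PsiGlob_PhiGlob {q : ℂ × ℂ} (hq : q ∈ Uprime) : PsiGlob (PhiGlob q) = q := by
  obtain ⟨z₁, z₂⟩ := q
  have hexp : Real.exp (2 * (Real.log (wDef (z₁, z₂)) / 2)) = wDef (z₁, z₂) := by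
    rw [mul_div_cancel₀ _ two_ne_zero, Real.exp_log hq]
  simp only [PsiGlob, PhiGlob, hexp]
  simp only [Prod.mk.injEq, Complex.ext_iff, wDef, Complex.normSq_apply,
    Complex.add_re, Complex.add_im, Complex.mul_re, Complex.mul_im, Complex.div_ofNat_re,
    Complex.div_ofNat_im, Complex.ofReal_re, Complex.ofReal_im, Complex.I_re, Complex.I_im]
  refine ⟨⟨?_, ?_⟩, ?_, ?_⟩ <;> ring

theorem range_PsiGlob : Set.range PsiGlob = Uprime := by
  refine Set.Subset.antisymm ?_ fun q hq => ⟨PhiGlob q, PsiGlob_PhiGlob hq⟩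
  rintro _ ⟨p, rfl⟩
  show 0 < wDef (PsiGlob p)
  rw [wDef_PsiGlob]
  exact Real.exp_pos _

/-- `Ψ` is a smooth diffeomorphism from all of `ℝ⁴` onto `U'`; in the
coordinates `(t,y,z,q)` the structures of Theorem 1 become globally regular on `ℝ⁴`. -/
theorem PsiGlob_global_diffeo :
    ContDiff ℝ (⊤ : ℕ∞) PsiGlob ∧
    Function.Injective PsiGlob ∧
    Set.range PsiGlob = Uprime ∧
    (∃ Φ : ℂ × ℂ → ℝ × ℝ × ℝ × ℝ, ContDiffOn ℝ (⊤ : ℕ∞) Φ Uprime ∧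
      (∀ p : ℝ × ℝ × ℝ × ℝ, Φ (PsiGlob p) = p) ∧ (∀ q ∈ Uprime, PsiGlob (Φ q) = q)) :=
  ⟨contDiff_PsiGlob, Function.LeftInverse.injective PhiGlob_PsiGlob, range_PsiGlob,
    PhiGlob, contDiffOn_PhiGlob, PhiGlob_PsiGlob, fun _ => PsiGlob_PhiGlob⟩
end
end

section
/- Let U', g and J be as in the preceding statement (the hermitian structure of opposite orientation on the explicit Ricci-flat example). Then the fundamental 2-form ω(X,Y) = g(X, JY), which equals i[(v − 2z₂z̄₂)^{−1/2}·½·(dz̄₁ − 2z₂dz̄₂)∧(dz₁ − 2z̄₂dz₂) + 2(v − 2z₂z̄₂)^{1/2} dz₂∧dz̄₂], is a closed 2-form on U'; hence (U', g, J) is a Kähler structure. -/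
noncomputable section

/-- The hermitian structure (of the opposite orientation)
`J = i[(dz₁ − 2z̄₂dz₂)⊗∂_{z₁} − (dz̄₁ − 2z₂dz̄₂)⊗∂_{z̄₁} + dz̄₂⊗(∂_{z̄₂} + 2z₂∂_{z̄₁}) − dz₂⊗(∂_{z₂} + 2z̄₂∂_{z₁})]`
as a real endomorphism of the tangent space `ℂ² ≅ ℝ⁴`: a real tangent vector `X`
corresponds to `X.1 ∂_{z₁} + conj X.1 ∂_{z̄₁} + X.2 ∂_{z₂} + conj X.2 ∂_{z̄₂}`; the
components below are the `∂_{z₁}`- and `∂_{z₂}`-coefficients of `J X` (the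
`∂_{z̄}`-coefficients are their conjugates). -/
def JKah (p : ℂ × ℂ) (X : ℂ × ℂ) : ℂ × ℂ :=
  (Complex.I * AForm p X + (-Complex.I * X.2) * (2 * starRingEnd ℂ p.2),
   -Complex.I * X.2)

/-- The fundamental 2-form `ω(X,Y) = g(X, J Y)` of the Kähler structure. -/
def omegaKah (p : ℂ × ℂ) (X Y : ℂ × ℂ) : ℝ := gExpl p X (JKah p Y)

/-!
Write `A = dz₁ − 2z̄₂dz₂` and `w = v − 2z₂z̄₂`. Since `A ∘ J = iA` and `dz₂ ∘ J = −i dz₂`,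
`ω = (2i)⁻¹ (w^{-1/2} A∧Ā − 4 w^{1/2} dz₂∧dz̄₂)`. Two identities make `dω` vanish:
`dw = A + Ā`, so `dw∧A∧Ā = 0`; and `dA = 2 dz₂∧dz̄₂`, so `d(A∧Ā) = 2 dw∧dz₂∧dz̄₂`, which cancels
against `d(4 w^{1/2}) ∧ dz₂∧dz̄₂ = 2 w^{-1/2} dw∧dz₂∧dz̄₂`.
-/

open Complex ComplexConjugate ContinuousLinearMap

theorem AForm_JKah (p Y : ℂ × ℂ) : AForm p (JKah p Y) = I * AForm p Y := by
  simp only [AForm, JKah]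
  ring

theorem omegaKah_eq (p X Y : ℂ × ℂ) :
    omegaKah p X Y = (√(wDef p))⁻¹ * (AForm p X * conj (AForm p Y)).im
      - 4 * √(wDef p) * (X.2 * conj Y.2).im := by
  have hJ : (JKah p Y).2 = -I * Y.2 := rfl
  rw [omegaKah, gExpl, AForm_JKah, hJ]
  simp only [one_div, map_mul, map_neg, conj_I, mul_re, mul_im, neg_re, neg_im, conj_re, conj_im,
    I_re, I_im]
  ring

theorem ofReal_im_mul_conj (a b : ℂ) :
    ((a * conj b).im : ℂ) = I * (1 / 2) * (conj a * b - a * conj b) := by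
  simp [Complex.ext_iff, mul_re, mul_im]
  ring

def AFormCLM (p : ℂ × ℂ) : (ℂ × ℂ) →L[ℝ] ℂ :=
  fst ℝ ℂ ℂ - (2 * conj p.2) • snd ℝ ℂ ℂ

@[simp]
theorem AFormCLM_apply (p X : ℂ × ℂ) : AFormCLM p X = AForm p X := by
  simp [AFormCLM, AForm, mul_assoc]

theorem hasFDerivAt_wDef (p : ℂ × ℂ) :
    HasFDerivAt wDef (2 • reCLM.comp (AFormCLM p)) p := by
  have h := ((reCLM.comp (fst ℝ ℂ ℂ)).hasFDerivAt (x := p)).const_mul 2 |>.sub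
    (((snd ℝ ℂ ℂ).hasFDerivAt (x := p)).norm_sq.const_mul 2)
  refine h.congr_fderiv ?_ |>.congr_of_eventuallyEq (.of_forall fun q => ?_)
  · ext Z <;> simp [AForm, Complex.inner, mul_re]
    ring
  · simp [wDef, normSq_eq_norm_sq]

theorem hasFDerivAt_AForm (p X : ℂ × ℂ) :
    HasFDerivAt (fun q => AForm q X)
      (-(2 * X.2) • (conjCLE.toContinuousLinearMap.comp (snd ℝ ℂ ℂ))) p := by
  have h := (hasFDerivAt_const X.1 p).sub
    (((conjCLE.toContinuousLinearMap.comp (snd ℝ ℂ ℂ)).hasFDerivAt (x := p)).const_mul (2 * X.2))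
  refine h.congr_fderiv (by ext <;> simp) |>.congr_of_eventuallyEq (.of_forall fun q => ?_)
  simp [AForm]
  ring

theorem fderiv_omegaKah_apply {p : ℂ × ℂ} (hp : p ∈ Uprime) (X Y Z : ℂ × ℂ) :
    fderiv ℝ (fun q => omegaKah q X Y) p Z =
      -((AForm p Z).re / (√(wDef p) * wDef p)) * (AForm p X * conj (AForm p Y)).im
      - 2 / √(wDef p) * (conj Z.2 * X.2 * conj (AForm p Y) + AForm p X * (Z.2 * conj Y.2)).im
      - 4 * (AForm p Z).re / √(wDef p) * (X.2 * conj Y.2).im := by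
  have hs : √(wDef p) ≠ 0 := Real.sqrt_ne_zero'.mpr hp
  have hsqrt := (hasFDerivAt_wDef p).sqrt (ne_of_gt hp)
  have hinv := (hasDerivAt_inv hs).comp_hasFDerivAt p hsqrt
  have him := imCLM.hasFDerivAt.comp p ((hasFDerivAt_AForm p X).mul (hasFDerivAt_AForm p Y).star)
  have H := (hinv.mul him).sub ((hsqrt.const_mul 4).mul_const (X.2 * conj Y.2).im)
  rw [(H.congr_of_eventuallyEq (.of_forall fun q => omegaKah_eq q X Y)).fderiv]
  simp [Real.sq_sqrt hp.le]
  field_simp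
  ring

-- `dw∧A∧Ā = 0` in coordinates, with `a, b, c` the values of `A`.
theorem cyclic_re_mul_im_mul_conj (a b c : ℂ) :
    a.re * (b * conj c).im + b.re * (c * conj a).im + c.re * (a * conj b).im = 0 := by
  simp only [mul_im, conj_re, conj_im]
  ring

-- `d(A∧Ā) − 2 dw∧dz₂∧dz̄₂ = 0` in coordinates, with `x, y, z` the values of `dz₂`.
theorem cyclic_im_conj_mul (a b c x y z : ℂ) :
    (conj x * y * conj c + b * (x * conj z)).im + 2 * a.re * (y * conj z).im +
      ((conj y * z * conj a + c * (y * conj x)).im + 2 * b.re * (z * conj x).im) +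
      ((conj z * x * conj b + a * (z * conj y)).im + 2 * c.re * (x * conj y).im) = 0 := by
  simp only [mul_im, mul_re, add_im, conj_re, conj_im]
  ring

theorem omegaKah_cyclic_fderiv_eq_zero {p : ℂ × ℂ} (hp : p ∈ Uprime) (X Y Z : ℂ × ℂ) :
    fderiv ℝ (fun q => omegaKah q Y Z) p X + fderiv ℝ (fun q => omegaKah q Z X) p Y +
      fderiv ℝ (fun q => omegaKah q X Y) p Z = 0 := by
  rw [fderiv_omegaKah_apply hp, fderiv_omegaKah_apply hp, fderiv_omegaKah_apply hp]
  linear_combination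
    -1 / (√(wDef p) * wDef p) * cyclic_re_mul_im_mul_conj (AForm p X) (AForm p Y) (AForm p Z) -
      2 / √(wDef p) * cyclic_im_conj_mul (AForm p X) (AForm p Y) (AForm p Z) X.2 Y.2 Z.2

/-- The fundamental 2-form `ω(X,Y) = g(X, JY)` equals
`i[(v − 2z₂z̄₂)^{−1/2}·½·(dz̄₁ − 2z₂dz̄₂)∧(dz₁ − 2z̄₂dz₂) + 2(v − 2z₂z̄₂)^{1/2} dz₂∧dz̄₂]`
(with `(α∧β)(X,Y) = α(X)β(Y) − β(X)α(Y)`), and it is closed on `U'` (the cyclic sum of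
directional derivatives of its coefficients vanishes); hence `(U', g, J)` is Kähler. -/
theorem omegaKah_formula_closed :
    (∀ p ∈ Uprime, ∀ X Y : ℂ × ℂ,
      ((omegaKah p X Y : ℝ) : ℂ) =
        Complex.I *
          (((1 / Real.sqrt (wDef p) : ℝ) : ℂ) * (1 / 2) *
              (starRingEnd ℂ (AForm p X) * AForm p Y -
                AForm p X * starRingEnd ℂ (AForm p Y)) +
            ((2 * Real.sqrt (wDef p) : ℝ) : ℂ) *
              (X.2 * starRingEnd ℂ Y.2 - starRingEnd ℂ X.2 * Y.2))) ∧
    (∀ p ∈ Uprime, ∀ X Y Z : ℂ × ℂ,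
      fderiv ℝ (fun q => omegaKah q Y Z) p X +
        fderiv ℝ (fun q => omegaKah q Z X) p Y +
        fderiv ℝ (fun q => omegaKah q X Y) p Z = 0) := by
  refine ⟨fun p _ X Y => ?_, fun p hp => omegaKah_cyclic_fderiv_eq_zero hp⟩
  rw [omegaKah_eq]
  push_cast
  rw [ofReal_im_mul_conj, ofReal_im_mul_conj]
  ring
end
end
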